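/- arXiv:2306.16385 — 2 statements merged into one kernel-verified Lean document; each statement's English description precedes it below -/
import Mathlib

section
/- Let V be a valuation domain with valuation v and fraction field K, with principal maximal ideal 𝔪 = tV, and let θ(x) = t(1+x⁴)/((1+tx²)(t+x²)). For nonzero φ₁, φ₂ ∈ K(x) both mapping a ∈ K into V, set ρ(x) = φ₁(x) + θ(φ₁(x)/φ₂(x))·φ₂(x). Then for every a ∈ K at which all expressions are defined and φ₂(a) ≠ 0, one has v(ρ(a)) = min{v(φ₁(a)), v(φ₂(a))}. -/
/-!
Put `c = b₁ / b₂`, so that `ρ = (c + θ(c)) · b₂` and it suffices to show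
`v (c + θ(c)) = max (v c) 1`. Since `t` generates the maximal ideal, `v c < 1` forces
`v (c²) < v t`, and then each factor of `θ(c)` has the valuation of its dominant term, giving
`v θ(c) = 1`. As `θ(1/c) = θ(c)`, the same holds when `v c > 1`, while for a unit `c` the factor
`t` makes `θ(c)` small. In every case one summand of `c + θ(c)` strictly dominates.
-/

section

variable {K Γ₀ : Type*} [Field K] [LinearOrderedCommGroupWithZero Γ₀]

def theta (t x : K) : K :=
  t * (1 + x ^ 4) / ((1 + t * x ^ 2) * (t + x ^ 2))

theorem theta_inv (t c : K) : theta t c⁻¹ = theta t c := by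
  rcases eq_or_ne c 0 with rfl | hc
  · rw [inv_zero]
  unfold theta
  rw [← mul_div_mul_left _ _ (pow_ne_zero 4 hc)]
  congr 1
  · field_simp
    ring
  · field_simp
    ring

namespace Valuation

variable (v : Valuation K Γ₀) {t c : K}

theorem map_theta_of_lt_one (ht0 : t ≠ 0) (ht1 : v t < 1)
    (hprin : ∀ x : K, v x < 1 → v x ≤ v t) (hc : v c < 1) : v (theta t c) = 1 := by
  have hvt : 0 < v t := v.pos_iff.2 ht0
  have hc2 : v (c ^ 2) < v t :=
    calc v (c ^ 2) = v c * v c := by rw [map_pow, sq]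
      _ ≤ v t * v c := mul_le_mul_left (hprin c hc) _
      _ < v t * 1 := mul_lt_mul_of_pos_left hc hvt
      _ = v t := mul_one _
  have hnum : v (1 + c ^ 4) = 1 :=
    v.map_one_add_of_lt (by rw [map_pow]; exact pow_lt_one₀ zero_le hc (by norm_num))
  have hden₁ : v (1 + t * c ^ 2) = 1 :=
    v.map_one_add_of_lt (by rw [map_mul]; exact mul_lt_one_of_lt_of_le ht1 (hc2.trans ht1).le)
  have hden₂ : v (t + c ^ 2) = v t := v.map_add_eq_of_lt_left hc2
  rw [theta, map_div₀, map_mul, map_mul, hnum, hden₁, hden₂, mul_one, one_mul,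
    div_self hvt.ne']

theorem map_theta_of_one_lt (ht0 : t ≠ 0) (ht1 : v t < 1)
    (hprin : ∀ x : K, v x < 1 → v x ≤ v t) (hc : 1 < v c) : v (theta t c) = 1 := by
  rw [← theta_inv]
  exact v.map_theta_of_lt_one ht0 ht1 hprin (by rw [map_inv₀]; exact inv_lt_one_of_one_lt₀ hc)

theorem map_theta_lt_one_of_eq_one (ht1 : v t < 1) (hc : v c = 1) : v (theta t c) < 1 := by
  have hc2 : v (c ^ 2) = 1 := by rw [map_pow, hc, one_pow]
  have hnum : v (1 + c ^ 4) ≤ 1 :=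
    v.map_add_le (by rw [map_one]) (by rw [map_pow, hc, one_pow])
  have hden₁ : v (1 + t * c ^ 2) = 1 :=
    v.map_one_add_of_lt (by rw [map_mul, hc2, mul_one]; exact ht1)
  have hden₂ : v (t + c ^ 2) = 1 := by
    rw [v.map_add_eq_of_lt_right (hc2.symm ▸ ht1), hc2]
  rw [theta, map_div₀, map_mul, map_mul, hden₁, hden₂, mul_one, div_one]
  exact mul_lt_one_of_lt_of_le ht1 hnum

theorem map_add_theta (ht0 : t ≠ 0) (ht1 : v t < 1)
    (hprin : ∀ x : K, v x < 1 → v x ≤ v t) (c : K) :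
    v (c + theta t c) = max (v c) 1 := by
  rcases lt_trichotomy (v c) 1 with hc | hc | hc
  · have hθ := v.map_theta_of_lt_one ht0 ht1 hprin hc
    rw [v.map_add_eq_of_lt_right (hθ ▸ hc), hθ, max_eq_right hc.le]
  · rw [v.map_add_eq_of_lt_left (hc ▸ v.map_theta_lt_one_of_eq_one ht1 hc), hc, max_self]
  · have hθ := v.map_theta_of_one_lt ht0 ht1 hprin hc
    rw [v.map_add_eq_of_lt_left (hθ ▸ hc), max_eq_left hc.le]

end Valuation

end

theorem val_rho_eq_max_general {K Γ₀ : Type*} [Field K] [LinearOrderedCommGroupWithZero Γ₀]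
    (v : Valuation K Γ₀) (t : K) (ht0 : t ≠ 0) (ht1 : v t < 1)
    (hprin : ∀ x : K, v x < 1 → v x ≤ v t)
    (b₁ b₂ : K) (hb20 : b₂ ≠ 0) :
    v (b₁ + t * (1 + (b₁ / b₂) ^ 4) /
        ((1 + t * (b₁ / b₂) ^ 2) * (t + (b₁ / b₂) ^ 2)) * b₂) = max (v b₁) (v b₂) := by
  set c := b₁ / b₂
  have hb₁ : b₁ = c * b₂ := (div_mul_cancel₀ b₁ hb20).symm
  have hρ : b₁ + theta t c * b₂ = (c + theta t c) * b₂ := by rw [hb₁, add_mul]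
  calc v (b₁ + theta t c * b₂) = max (v c) 1 * v b₂ := by
        rw [hρ, map_mul, v.map_add_theta ht0 ht1 hprin]
    _ = max (v b₁) (v b₂) := by rw [← max_mul_mul_right, one_mul, hb₁, map_mul]

/-- Let `V` be the valuation ring of a valuation `v` on `K` with principal maximal ideal
`𝔪 = tV`, and let `θ(x) = t(1+x⁴)/((1+tx²)(t+x²))`.  If `b₁ = φ₁(a)` and `b₂ = φ₂(a)` are
values in `V` with `b₂ ≠ 0`, then `ρ = b₁ + θ(b₁/b₂)·b₂` satisfies
`v ρ = max (v b₁) (v b₂)` (in additive notation, `min{v(φ₁(a)), v(φ₂(a))}`). -/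
theorem val_rho_eq_max {K Γ₀ : Type*} [Field K] [LinearOrderedCommGroupWithZero Γ₀]
    (v : Valuation K Γ₀) (t : K) (ht0 : t ≠ 0) (ht1 : v t < 1)
    (hprin : ∀ x : K, v x < 1 → v x ≤ v t)
    (b₁ b₂ : K) (hb1 : v b₁ ≤ 1) (hb2 : v b₂ ≤ 1) (hb20 : b₂ ≠ 0) :
    v (b₁ + t * (1 + (b₁ / b₂) ^ 4) /
        ((1 + t * (b₁ / b₂) ^ 2) * (t + (b₁ / b₂) ^ 2)) * b₂) = max (v b₁) (v b₂) :=
  val_rho_eq_max_general v t ht0 ht1 hprin b₁ b₂ hb20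
end

section
/- Let V be a valuation domain with valuation v and maximal ideal 𝔪, and t ∈ 𝔪 nonzero. In the ring Int^R(V) = {φ ∈ Frac(V)(x) | φ(d) ∈ V for all d ∈ V}, the element tx belongs to the Skolem closure of the ideal (x², t²): for every d ∈ V, td ∈ (d², t²) as ideals of V. -/
variable {K : Type*} [Field K]

theorem eval₂_ne_zero_of_dvd {p q : Polynomial K} (h : p ∣ q) {a : K}
    (hq : q.eval₂ (RingHom.id K) a ≠ 0) : p.eval₂ (RingHom.id K) a ≠ 0 := by
  obtain ⟨c, rfl⟩ := h
  rw [Polynomial.eval₂_mul] at hq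
  exact left_ne_zero_of_mul hq

/-- The ring of integer-valued rational functions on `E ⊆ K` over the subring `D ⊆ K`:
rational functions defined at every point of `E` whose values there lie in `D`. -/
def IntR (E : Set K) (D : Subring K) : Subring (RatFunc K) where
  carrier := {φ | ∀ a ∈ E, φ.denom.eval₂ (RingHom.id K) a ≠ 0 ∧
    RatFunc.eval (RingHom.id K) a φ ∈ D}
  one_mem' := by
    intro a _
    refine ⟨by simp, ?_⟩
    simpa using one_mem D
  zero_mem' := by
    intro a _
    refine ⟨by simp, ?_⟩
    simpa using zero_mem D
  mul_mem' := by
    intro x y hx hy a ha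
    obtain ⟨hx1, hx2⟩ := hx a ha
    obtain ⟨hy1, hy2⟩ := hy a ha
    refine ⟨eval₂_ne_zero_of_dvd (RatFunc.denom_mul_dvd x y) ?_, ?_⟩
    · rw [Polynomial.eval₂_mul]; exact mul_ne_zero hx1 hy1
    · rw [RatFunc.eval_mul _ _ hx1 hy1]; exact mul_mem hx2 hy2
  add_mem' := by
    intro x y hx hy a ha
    obtain ⟨hx1, hx2⟩ := hx a ha
    obtain ⟨hy1, hy2⟩ := hy a ha
    refine ⟨eval₂_ne_zero_of_dvd (RatFunc.denom_add_dvd x y) ?_, ?_⟩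
    · rw [Polynomial.eval₂_mul]; exact mul_ne_zero hx1 hy1
    · rw [RatFunc.eval_add _ _ hx1 hy1]; exact add_mem hx2 hy2
  neg_mem' := by
    intro x hx a ha
    obtain ⟨hx1, hx2⟩ := hx a ha
    have hC : (-1 : RatFunc K) = RatFunc.C (-1) := by
      rw [map_neg, map_one]
    have hd1 : (RatFunc.denom (-1 : RatFunc K)).eval₂ (RingHom.id K) a ≠ 0 := by
      rw [hC, RatFunc.denom_C]; simp
    have hneg : (-x) = (-1 : RatFunc K) * x := by ring
    constructor
    · refine eval₂_ne_zero_of_dvd ?_ (q := RatFunc.denom (-1 : RatFunc K) * RatFunc.denom x) ?_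
      · rw [hneg]; exact RatFunc.denom_mul_dvd _ _
      · rw [Polynomial.eval₂_mul]; exact mul_ne_zero hd1 hx1
    · rw [hneg, RatFunc.eval_mul _ _ hd1 hx1, hC, RatFunc.eval_C]
      simpa using neg_mem hx2

/-- Evaluation at a point `a ∈ E` as a ring homomorphism `IntR E D →+* D`. -/
noncomputable def evalHom (E : Set K) (D : Subring K) (a : K) (ha : a ∈ E) :
    IntR E D →+* D where
  toFun φ := ⟨RatFunc.eval (RingHom.id K) a φ.1, (φ.2 a ha).2⟩
  map_one' := by
    apply Subtype.ext
    simp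
  map_mul' x y := by
    apply Subtype.ext
    exact RatFunc.eval_mul _ _ (x.2 a ha).1 (y.2 a ha).1
  map_zero' := by
    apply Subtype.ext
    simp
  map_add' x y := by
    apply Subtype.ext
    exact RatFunc.eval_add _ _ (x.2 a ha).1 (y.2 a ha).1

theorem mul_mem_span_sq_pair {R : Type*} [CommRing R] [PreValuationRing R] (a b : R) :
    a * b ∈ Ideal.span ({a ^ 2, b ^ 2} : Set R) := by
  rw [Ideal.mem_span_pair]
  rcases ValuationRing.dvd_total a b with ⟨c, rfl⟩ | ⟨c, rfl⟩
  · exact ⟨c, 0, by ring⟩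
  · exact ⟨0, c, by ring⟩

section IntR

variable {E : Set K} {D : Subring K}

theorem C_mem_IntR {c : K} (hc : c ∈ D) : RatFunc.C c ∈ IntR E D :=
  fun a _ => ⟨by simp [RatFunc.denom_C], by simpa [RatFunc.eval_C] using hc⟩

theorem X_mem_IntR (hED : E ⊆ D) : (RatFunc.X : RatFunc K) ∈ IntR E D :=
  fun a ha => ⟨by simp [RatFunc.denom_X], by simpa [RatFunc.eval_X] using hED ha⟩

theorem evalHom_C {a : K} (ha : a ∈ E) {c : K} (hc : c ∈ D) :
    evalHom E D a ha ⟨RatFunc.C c, C_mem_IntR hc⟩ = ⟨c, hc⟩ :=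
  Subtype.ext (RatFunc.eval_C ..)

theorem evalHom_X (hED : E ⊆ D) {a : K} (ha : a ∈ E) :
    evalHom E D a ha ⟨RatFunc.X, X_mem_IntR hED⟩ = ⟨a, hED ha⟩ :=
  Subtype.ext (RatFunc.eval_X ..)

theorem evalHom_surjective {a : K} (ha : a ∈ E) : Function.Surjective (evalHom E D a ha) :=
  fun c => ⟨_, evalHom_C ha c.2⟩

end IntR

theorem tx_mem_skolemClosure_general {K : Type*} [Field K] (V : Subring K) [ValuationRing ↥V]
    (t : ↥V) :
    (∀ d : ↥V, t * d ∈ Ideal.span ({d ^ 2, t ^ 2} : Set ↥V)) ∧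
      ∃ (hX : (RatFunc.X : RatFunc K) ∈ IntR (V : Set K) V)
        (hT : algebraMap K (RatFunc K) (t : K) ∈ IntR (V : Set K) V),
        ∀ a ∈ (V : Set K),
          ∃ ψ ∈ Ideal.span ({(⟨RatFunc.X, hX⟩ : ↥(IntR (V : Set K) V)) ^ 2,
              (⟨algebraMap K (RatFunc K) (t : K), hT⟩ : ↥(IntR (V : Set K) V)) ^ 2} :
              Set ↥(IntR (V : Set K) V)),
            RatFunc.eval (RingHom.id K) a (ψ : RatFunc K) =
              RatFunc.eval (RingHom.id K) a
                ((algebraMap K (RatFunc K) (t : K)) * RatFunc.X) := by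
  have hspan (d : ↥V) : t * d ∈ Ideal.span ({d ^ 2, t ^ 2} : Set ↥V) :=
    mul_comm d t ▸ mul_mem_span_sq_pair d t
  have hT : algebraMap K (RatFunc K) (t : K) ∈ IntR (V : Set K) V :=
    RatFunc.algebraMap_eq_C (K := K) ▸ C_mem_IntR t.2
  refine ⟨hspan, X_mem_IntR subset_rfl, hT, fun a ha => ?_⟩
  set f := evalHom (V : Set K) V a ha
  -- `f` is onto, so the values at `a` of the ideal `(x², t²)` form the ideal `(a², t²)` of `V`.
  have hval : f (⟨_, hT⟩ * ⟨RatFunc.X, X_mem_IntR subset_rfl⟩) ∈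
      Ideal.map f (Ideal.span {⟨RatFunc.X, X_mem_IntR subset_rfl⟩ ^ 2, ⟨_, hT⟩ ^ 2}) := by
    have hfT : f ⟨_, hT⟩ = t := by
      simpa only [RatFunc.algebraMap_eq_C] using evalHom_C (D := V) ha t.2
    rw [Ideal.map_span, Set.image_pair, map_mul, map_pow, map_pow, hfT, evalHom_X subset_rfl]
    exact hspan _
  obtain ⟨ψ, hψ, hfψ⟩ := (Ideal.mem_map_iff_of_surjective f (evalHom_surjective ha)).mp hval
  exact ⟨ψ, hψ, congrArg Subtype.val hfψ⟩

/-- Let `V` be a valuation domain (a valuation subring of its fraction field `K`) with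
maximal ideal `𝔪`, and `t ∈ 𝔪` nonzero.  In `Int^R(V)` the element `tx` lies in the Skolem
closure of the ideal `(x², t²)`: for every `d ∈ V`, `td ∈ (d², t²)` as ideals of `V`. -/
theorem tx_mem_skolemClosure {K : Type*} [Field K] (V : Subring K) [ValuationRing ↥V]
    (hfrac : ∀ x : K, x ∈ V ∨ x⁻¹ ∈ V)
    (t : ↥V) (ht0 : t ≠ 0) (htm : ¬ IsUnit t) :
    (∀ d : ↥V, t * d ∈ Ideal.span ({d ^ 2, t ^ 2} : Set ↥V)) ∧
      ∃ (hX : (RatFunc.X : RatFunc K) ∈ IntR (V : Set K) V)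
        (hT : algebraMap K (RatFunc K) (t : K) ∈ IntR (V : Set K) V),
        ∀ a ∈ (V : Set K),
          ∃ ψ ∈ Ideal.span ({(⟨RatFunc.X, hX⟩ : ↥(IntR (V : Set K) V)) ^ 2,
              (⟨algebraMap K (RatFunc K) (t : K), hT⟩ : ↥(IntR (V : Set K) V)) ^ 2} :
              Set ↥(IntR (V : Set K) V)),
            RatFunc.eval (RingHom.id K) a (ψ : RatFunc K) =
              RatFunc.eval (RingHom.id K) a
                ((algebraMap K (RatFunc K) (t : K)) * RatFunc.X) :=
  tx_mem_skolemClosure_general V t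
end
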